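/- Let (μ̃, μ) be a pair of probability measures with finite moments, Jacobi parameters (β̃_n, γ̃_n) and (β_n, γ_n) respectively, and two-state free cumulants R_n(μ̃, μ). Then R_1 = β̃_0, R_2 = γ̃_0, R_3 = γ̃_0(β̃_1 − β_0), and R_4 = γ̃_0[(β̃_1 − β_0)² + (γ̃_1 − γ_0)]. -/

import Mathlib

/-
The moments of a measure with Jacobi parameters `(β, γ)` are weighted Motzkin path counts:
applying `p ↦ ∫ p dμ` to `X ^ k * P n` and using the three-term recurrence
`X P_n = P_{n+1} + β_n P_n + γ_{n-1} P_{n-1}` together with `∫ P_n dμ = δ_{n,0}` gives the path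
recursion. On the combinatorial side, every partition of `Fin m` is the fibre partition of a
self-map of `Fin m`, so for `m ≤ 4` the noncrossing partitions, with the sizes of their outer and
inner blocks, can be enumerated by evaluation. The moment-cumulant relations for `m ≤ 4` then
become polynomial identities, which are solved successively for `R 1, …, R 4`.
-/

open scoped Classical
open MeasureTheory Finset

noncomputable section

/-- `V` is nested inside `U`: some interval with endpoints in `U` contains all of `V`. -/
def Nests {m : ℕ} (U V : Finset (Fin m)) : Prop :=
  ∃ r ∈ U, ∃ s ∈ U, ∀ k ∈ V, r ≤ k ∧ k ≤ s

/-- A finpartition of `{1,...,m}` is noncrossing. -/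
def IsNoncrossing {m : ℕ} (π : Finpartition (Finset.univ : Finset (Fin m))) : Prop :=
  ∀ V₁ ∈ π.parts, ∀ V₂ ∈ π.parts, ∀ x₁ x₂ x₃ x₄ : Fin m,
    x₁ < x₂ → x₂ < x₃ → x₃ < x₄ →
    x₁ ∈ V₁ → x₃ ∈ V₁ → x₂ ∈ V₂ → x₄ ∈ V₂ → V₁ = V₂

/-- The depth of a block: the number of other blocks nesting it. -/
def depth {m : ℕ} (π : Finpartition (Finset.univ : Finset (Fin m)))
    (V : Finset (Fin m)) : ℕ :=
  (π.parts.filter (fun U => U ≠ V ∧ Nests U V)).card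

/-- Noncrossing partitions of `{1,...,m}`. -/
def NCset (m : ℕ) : Finset (Finpartition (Finset.univ : Finset (Fin m))) :=
  Finset.univ.filter IsNoncrossing

/-- Noncrossing partitions with all blocks of size at most 2. -/
def NC12 (m : ℕ) : Finset (Finpartition (Finset.univ : Finset (Fin m))) :=
  Finset.univ.filter (fun π => IsNoncrossing π ∧ ∀ V ∈ π.parts, V.card ≤ 2)

/-- Interval partitions of `{1,...,m}`. -/
def IntPart (m : ℕ) : Finset (Finpartition (Finset.univ : Finset (Fin m))) :=
  Finset.univ.filter
    (fun π => ∀ V ∈ π.parts, ∀ x ∈ V, ∀ y ∈ V, ∀ z : Fin m, x ≤ z → z ≤ y → z ∈ V)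

/-- The `m`-th moment of a measure on `ℝ`. -/
def mom (μ : Measure ℝ) (m : ℕ) : ℝ := ∫ x, x ^ m ∂μ

/-- `μ` has all moments finite. -/
def FiniteMoments (μ : Measure ℝ) : Prop :=
  ∀ m : ℕ, Integrable (fun x => x ^ m) μ

/-- `(β, γ)` are Jacobi parameters for `μ`: there are monic orthogonal polynomials
satisfying the three-term recurrence. -/
def HasJacobi (μ : Measure ℝ) (β γ : ℕ → ℝ) : Prop :=
  ∃ P : ℕ → Polynomial ℝ,
    (∀ n, (P n).Monic) ∧ (∀ n, (P n).natDegree = n) ∧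
    (∀ i j, i ≠ j → ∫ x, (P i).eval x * (P j).eval x ∂μ = 0) ∧
    (Polynomial.X * P 0 = P 1 + Polynomial.C (β 0) * P 0) ∧
    (∀ n, Polynomial.X * P (n + 1) =
      P (n + 2) + Polynomial.C (β (n + 1)) * P (n + 1) + Polynomial.C (γ n) * P n)

/-- `r` is the sequence of free cumulants of `μ` (moment-cumulant formula over
noncrossing partitions). -/
def FreeCumulants (μ : Measure ℝ) (r : ℕ → ℝ) : Prop :=
  ∀ m : ℕ, 1 ≤ m → mom μ m = ∑ π ∈ NCset m, ∏ V ∈ π.parts, r V.card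

/-- `η` is the sequence of Boolean cumulants of `μ`. -/
def BooleanCumulants (μ : Measure ℝ) (η : ℕ → ℝ) : Prop :=
  ∀ m : ℕ, 1 ≤ m → mom μ m = ∑ π ∈ IntPart m, ∏ V ∈ π.parts, η V.card

/-- `R` is the sequence of two-state free cumulants of the pair `(μ̃, μ)`,
where `r` are the free cumulants of `μ`. -/
def TwoStateCumulants (μt μ : Measure ℝ) (R r : ℕ → ℝ) : Prop :=
  FreeCumulants μ r ∧
  ∀ m : ℕ, 1 ≤ m → mom μt m =
    ∑ π ∈ NCset m,
      (∏ V ∈ π.parts.filter (fun V => depth π V = 0), R V.card) *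
      (∏ V ∈ π.parts.filter (fun V => depth π V ≠ 0), r V.card)

open Polynomial

/-- Total weight of the Motzkin paths with `k` steps from height `n` down to height `0`, where a
level step at height `h` has weight `β h` and a down step from height `h + 1` has weight `γ h`. -/
def motzkinWeight (β γ : ℕ → ℝ) : ℕ → ℕ → ℝ
  | 0, n => if n = 0 then 1 else 0
  | k + 1, 0 => motzkinWeight β γ k 1 + β 0 * motzkinWeight β γ k 0
  | k + 1, n + 1 => motzkinWeight β γ k (n + 2) + β (n + 1) * motzkinWeight β γ k (n + 1) +
      γ n * motzkinWeight β γ k n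

theorem LinearMap.apply_X_pow_mul_eq_motzkinWeight (L : ℝ[X] →ₗ[ℝ] ℝ) {P : ℕ → ℝ[X]}
    {β γ : ℕ → ℝ} (hL : ∀ n, L (P n) = if n = 0 then 1 else 0)
    (hrec0 : X * P 0 = P 1 + C (β 0) * P 0)
    (hrec : ∀ n, X * P (n + 1) = P (n + 2) + C (β (n + 1)) * P (n + 1) + C (γ n) * P n)
    (k n : ℕ) : L (X ^ k * P n) = motzkinWeight β γ k n := by
  induction k generalizing n with
  | zero => simpa [motzkinWeight] using hL n
  | succ k ih =>
    rw [pow_succ, mul_assoc]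
    cases n with
    | zero => simp only [hrec0, mul_add, ← smul_eq_C_mul, mul_smul_comm, map_add,
        map_smul, ih, smul_eq_mul, motzkinWeight]
    | succ n => simp only [hrec, mul_add, ← smul_eq_C_mul, mul_smul_comm, map_add,
        map_smul, ih, smul_eq_mul, motzkinWeight]

theorem FiniteMoments.integrable_eval {μ : Measure ℝ} (hμ : FiniteMoments μ) (p : ℝ[X]) :
    Integrable (fun x => p.eval x) μ := by
  simp_rw [eval_eq_sum_range]
  exact integrable_finsetSum _ fun i _ => (hμ i).const_mul _

def momentFunctional (μ : Measure ℝ) (hμ : FiniteMoments μ) : ℝ[X] →ₗ[ℝ] ℝ where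
  toFun p := ∫ x, p.eval x ∂μ
  map_add' p q := by
    simp only [eval_add]
    exact integral_add (hμ.integrable_eval p) (hμ.integrable_eval q)
  map_smul' a p := by
    simp only [eval_smul, smul_eq_mul, RingHom.id_apply]
    exact integral_const_mul a _

theorem HasJacobi.mom_eq_motzkinWeight {μ : Measure ℝ} [IsProbabilityMeasure μ]
    (hμ : FiniteMoments μ) {β γ : ℕ → ℝ} (hJ : HasJacobi μ β γ) (k : ℕ) :
    mom μ k = motzkinWeight β γ k 0 := by
  obtain ⟨P, hmonic, hdeg, horth, hrec0, hrec⟩ := hJ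
  have hP0 : P 0 = 1 := (hmonic 0).natDegree_eq_zero.mp (hdeg 0)
  have hL : ∀ n, momentFunctional μ hμ (P n) = if n = 0 then 1 else 0 := by
    intro n
    split_ifs with hn
    · simp [momentFunctional, hn, hP0]
    · simpa [momentFunctional, hP0] using horth n 0 hn
  simpa [hP0, momentFunctional, mom] using
    (momentFunctional μ hμ).apply_X_pow_mul_eq_motzkinWeight hL hrec0 hrec k 0

theorem HasJacobi.mom_one_to_four {μ : Measure ℝ} [IsProbabilityMeasure μ]
    (hμ : FiniteMoments μ) {β γ : ℕ → ℝ} (hJ : HasJacobi μ β γ) :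
    mom μ 1 = β 0 ∧ mom μ 2 = β 0 ^ 2 + γ 0 ∧
    mom μ 3 = β 0 ^ 3 + 2 * β 0 * γ 0 + β 1 * γ 0 ∧
    mom μ 4 = β 0 ^ 4 + 3 * β 0 ^ 2 * γ 0 + 2 * β 0 * β 1 * γ 0 + β 1 ^ 2 * γ 0 +
      γ 0 * γ 1 + γ 0 ^ 2 := by
  simp only [hJ.mom_eq_motzkinWeight hμ, motzkinWeight]
  norm_num
  refine ⟨by ring, by ring, by ring⟩

instance {m : ℕ} (U V : Finset (Fin m)) : Decidable (Nests U V) :=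
  inferInstanceAs (Decidable (∃ r ∈ U, ∃ s ∈ U, ∀ k ∈ V, r ≤ k ∧ k ≤ s))

def fibres {α : Type*} [Fintype α] [DecidableEq α] (c : α → α) : Finset (Finset α) :=
  univ.image fun x => univ.filter fun y => c x = c y

theorem Finpartition.exists_parts_eq_fibres {α : Type*} [Fintype α] [DecidableEq α]
    (π : Finpartition (univ : Finset α)) : ∃ c : α → α, π.parts = fibres c := by
  cases isEmpty_or_nonempty α
  · refine ⟨id, ?_⟩
    simp [fibres, Finpartition.parts_eq_empty_iff, univ_eq_empty]
  · set c := Function.invFun π.part ∘ π.part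
    have hrep : ∀ x, π.part (c x) = π.part x := fun x => Function.invFun_eq ⟨x, rfl⟩
    have hfib : ∀ x, univ.filter (fun y => c x = c y) = π.part x := by
      intro x
      ext y
      simp only [mem_filter, mem_univ, true_and,
        π.mem_part_iff_part_eq_part (mem_univ y) (mem_univ x)]
      exact ⟨fun h => by rw [← hrep y, ← h, hrep],
        fun h => congrArg (Function.invFun π.part) h.symm⟩
    refine ⟨c, ?_⟩
    simp only [fibres, hfib]
    ext V
    simp only [mem_image, mem_univ, true_and]
    exact ⟨fun hV => ⟨_, π.part_eq_of_mem hV (π.nonempty_of_mem_parts hV).choose_spec⟩,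
      by rintro ⟨x, rfl⟩; exact π.part_mem.2 (mem_univ x)⟩

theorem Finpartition.exists_parts_eq_fibres_iff {α : Type*} [Fintype α] [DecidableEq α]
    (P : Finset (Finset α)) :
    (∃ π : Finpartition (univ : Finset α), π.parts = P) ↔ ∃ c : α → α, fibres c = P := by
  refine ⟨fun ⟨π, hπ⟩ => ?_, fun ⟨c, hc⟩ => ?_⟩
  · obtain ⟨c, hc⟩ := π.exists_parts_eq_fibres
    exact ⟨c, hc ▸ hπ⟩
  · let _ : DecidableRel (Setoid.ker c) := fun a b => decEq (c a) (c b)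
    refine ⟨Finpartition.ofSetSetoid (Setoid.ker c) univ, ?_⟩
    rw [Finpartition.ofSetSetoid_parts, ← hc]
    rfl

section NoncrossingBlocks

variable {m : ℕ}

def IsNoncrossingBlocks (P : Finset (Finset (Fin m))) : Prop :=
  ∀ V₁ ∈ P, ∀ V₂ ∈ P, ∀ x₁ x₂ x₃ x₄ : Fin m,
    x₁ < x₂ → x₂ < x₃ → x₃ < x₄ →
    x₁ ∈ V₁ → x₃ ∈ V₁ → x₂ ∈ V₂ → x₄ ∈ V₂ → V₁ = V₂

instance : DecidablePred (IsNoncrossingBlocks (m := m)) := fun P =>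
  inferInstanceAs (Decidable (∀ V₁ ∈ P, ∀ V₂ ∈ P, ∀ x₁ x₂ x₃ x₄ : Fin m,
    x₁ < x₂ → x₂ < x₃ → x₃ < x₄ → x₁ ∈ V₁ → x₃ ∈ V₁ → x₂ ∈ V₂ → x₄ ∈ V₂ → V₁ = V₂))

def blockDepth (P : Finset (Finset (Fin m))) (V : Finset (Fin m)) : ℕ :=
  #{U ∈ P | U ≠ V ∧ Nests U V}

def blockSizes (P : Finset (Finset (Fin m))) : Multiset ℕ × Multiset ℕ :=
  ({V ∈ P | blockDepth P V = 0}.val.map card, {V ∈ P | blockDepth P V ≠ 0}.val.map card)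

variable (m) in
def ncBlocks : Finset (Finset (Finset (Fin m))) :=
  {P ∈ univ.image fibres | IsNoncrossingBlocks P}

theorem image_parts_NCset : (NCset m).image Finpartition.parts = ncBlocks m := by
  ext P
  simp only [mem_image, NCset, ncBlocks, mem_filter, mem_univ, true_and]
  rw [← Finpartition.exists_parts_eq_fibres_iff]
  constructor
  · rintro ⟨π, hπ, rfl⟩
    exact ⟨⟨π, rfl⟩, hπ⟩
  · rintro ⟨⟨π, rfl⟩, hπ⟩
    exact ⟨π, hπ, rfl⟩

-- The two sides differ only in the decidability instance used for `Nests`.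
theorem depth_eq_blockDepth (π : Finpartition (univ : Finset (Fin m))) (V : Finset (Fin m)) :
    depth π V = blockDepth π.parts V := by
  simp only [depth, blockDepth]
  congr!

end NoncrossingBlocks

theorem blockSizes_ncBlocks_one : (ncBlocks 1).val.map blockSizes = {({1}, 0)} := by
  decide

theorem blockSizes_ncBlocks_two : (ncBlocks 2).val.map blockSizes = {({1, 1}, 0), ({2}, 0)} := by
  decide

theorem blockSizes_ncBlocks_three :
    (ncBlocks 3).val.map blockSizes =
      {({1, 1, 1}, 0), ({1, 2}, 0), ({1, 2}, 0), ({3}, 0), ({2}, {1})} := by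
  decide

set_option maxRecDepth 10000 in
theorem blockSizes_ncBlocks_four :
    (ncBlocks 4).val.map blockSizes =
      {({1, 1, 1, 1}, 0), ({1, 1, 2}, 0), ({1, 1, 2}, 0), ({1, 1, 2}, 0), ({2, 2}, 0),
        ({1, 3}, 0), ({1, 3}, 0), ({4}, 0), ({1, 2}, {1}), ({1, 2}, {1}), ({3}, {1}), ({3}, {1}),
        ({2}, {1, 1}), ({2}, {2})} := by
  decide

section TwoStateSum

variable {S : Type*} [CommSemiring S]

def twoStateSum (m : ℕ) (R r : ℕ → S) : S :=
  ∑ π ∈ NCset m,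
    (∏ V ∈ π.parts.filter (fun V => depth π V = 0), R V.card) *
    (∏ V ∈ π.parts.filter (fun V => depth π V ≠ 0), r V.card)

theorem twoStateSum_eq_sum_blockSizes (m : ℕ) (R r : ℕ → S) :
    twoStateSum m R r =
      (((ncBlocks m).val.map blockSizes).map fun s => (s.1.map R).prod * (s.2.map r).prod).sum := by
  set weight : Multiset ℕ × Multiset ℕ → S := fun s => (s.1.map R).prod * (s.2.map r).prod
  calc twoStateSum m R r = ∑ π ∈ NCset m, weight (blockSizes π.parts) := by
        refine sum_congr rfl fun π _ => ?_
        simp only [weight, blockSizes, Multiset.map_map, prod_eq_multiset_prod,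
          depth_eq_blockDepth]
        rfl
    _ = ∑ P ∈ (NCset m).image Finpartition.parts, weight (blockSizes P) :=
        (sum_image (f := weight ∘ blockSizes) fun π _ π' _ h => Finpartition.ext h).symm
    _ = _ := by rw [image_parts_NCset, sum_eq_multiset_sum, Multiset.map_map]; rfl

variable (R r : ℕ → S)

theorem twoStateSum_one : twoStateSum 1 R r = R 1 := by
  simp [twoStateSum_eq_sum_blockSizes, blockSizes_ncBlocks_one]

theorem twoStateSum_two : twoStateSum 2 R r = R 1 ^ 2 + R 2 := by
  simp [twoStateSum_eq_sum_blockSizes, blockSizes_ncBlocks_two]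
  ring

theorem twoStateSum_three :
    twoStateSum 3 R r = R 1 ^ 3 + 2 * R 1 * R 2 + R 2 * r 1 + R 3 := by
  simp [twoStateSum_eq_sum_blockSizes, blockSizes_ncBlocks_three]
  ring

theorem twoStateSum_four :
    twoStateSum 4 R r = R 1 ^ 4 + 3 * R 1 ^ 2 * R 2 + 2 * R 1 * R 2 * r 1 + 2 * R 1 * R 3 +
      R 2 ^ 2 + R 2 * r 1 ^ 2 + R 2 * r 2 + 2 * R 3 * r 1 + R 4 := by
  simp [twoStateSum_eq_sum_blockSizes, blockSizes_ncBlocks_four]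
  ring

end TwoStateSum

theorem FreeCumulants.mom_eq_twoStateSum {μ : Measure ℝ} {r : ℕ → ℝ} (hr : FreeCumulants μ r)
    {m : ℕ} (hm : 1 ≤ m) : mom μ m = twoStateSum m r r := by
  rw [hr m hm, twoStateSum]
  exact sum_congr rfl fun π _ => (prod_filter_mul_prod_filter_not _ _ _).symm

theorem TwoStateCumulants.mom_eq_twoStateSum {μt μ : Measure ℝ} {R r : ℕ → ℝ}
    (hR : TwoStateCumulants μt μ R r) {m : ℕ} (hm : 1 ≤ m) : mom μt m = twoStateSum m R r :=
  hR.2 m hm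

theorem stmt_10 (μt μ : Measure ℝ) [IsProbabilityMeasure μt] [IsProbabilityMeasure μ]
    (hfint : FiniteMoments μt) (hfin : FiniteMoments μ)
    (βt γt β γ : ℕ → ℝ) (hJt : HasJacobi μt βt γt) (hJ : HasJacobi μ β γ)
    (R r : ℕ → ℝ) (hR : TwoStateCumulants μt μ R r) :
    R 1 = βt 0 ∧ R 2 = γt 0 ∧ R 3 = γt 0 * (βt 1 - β 0) ∧
    R 4 = γt 0 * ((βt 1 - β 0) ^ 2 + (γt 1 - γ 0)) := by
  obtain ⟨m1, m2, -, -⟩ := hJ.mom_one_to_four hfin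
  obtain ⟨mt1, mt2, mt3, mt4⟩ := hJt.mom_one_to_four hfint
  have e1 := twoStateSum_one r r ▸ hR.1.mom_eq_twoStateSum (m := 1) le_rfl
  have e2 := twoStateSum_two r r ▸ hR.1.mom_eq_twoStateSum (m := 2) (by norm_num)
  have et1 := twoStateSum_one R r ▸ hR.mom_eq_twoStateSum (m := 1) le_rfl
  have et2 := twoStateSum_two R r ▸ hR.mom_eq_twoStateSum (m := 2) (by norm_num)
  have et3 := twoStateSum_three R r ▸ hR.mom_eq_twoStateSum (m := 3) (by norm_num)
  have et4 := twoStateSum_four R r ▸ hR.mom_eq_twoStateSum (m := 4) (by norm_num)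
  have hr1 : r 1 = β 0 := by linear_combination m1 - e1
  have hr2 : r 2 = γ 0 := by linear_combination m2 - e2 - (r 1 + β 0) * hr1
  have hR1 : R 1 = βt 0 := by linear_combination mt1 - et1
  have hR2 : R 2 = γt 0 := by linear_combination mt2 - et2 - (R 1 + βt 0) * hR1
  rw [hR1, hR2, hr1] at et3
  have hR3 : R 3 = γt 0 * (βt 1 - β 0) := by linear_combination mt3 - et3
  rw [hR1, hR2, hR3, hr1, hr2] at et4
  exact ⟨hR1, hR2, hR3, by linear_combination mt4 - et4⟩
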